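/- arXiv:1907.05964 — 2 statements merged into one kernel-verified Lean document; each statement's English description precedes it below -/
import Mathlib

section
/- Let τ ∈ (0,1] be a constant. Then there exist three positive constants c₁, c₂, c₃ (depending only on τ) such that the following holds: for all positive integers m and m′ with m′ ≤ (1−τ)m and m sufficiently large, if X₁, …, X_m are independent random variables each uniform on {−1,1}, then Pr[|X₁ + ⋯ + X_m| ≥ c₁√m] ≥ c₂ + c₃ and Pr[|X₁ + ⋯ + X_{m′}| ≥ c₁√m] ≤ c₂ − c₃. -/
set_option maxHeartbeats 1000000

open MeasureTheory ProbabilityTheory Finset Real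
open scoped ENNReal

section RademacherAux


/-- central binomial lower bound -/
lemma cb_lower (N : ℕ) : (4:ℝ)^N / (2 * Real.sqrt N) ≤ Nat.centralBinom N := by
  induction N with
  | zero => simp [Nat.centralBinom]
  | succ N ih =>
    rcases Nat.eq_zero_or_pos N with rfl | hN
    · norm_num [Nat.centralBinom]
    have hrec : ((N:ℝ) + 1) * (Nat.centralBinom (N+1) : ℝ)
        = 2 * (2 * N + 1) * Nat.centralBinom N := by
      exact_mod_cast congrArg (Nat.cast : ℕ → ℝ) (Nat.succ_mul_centralBinom_succ N)
    have hsN : (0:ℝ) < Real.sqrt N := Real.sqrt_pos.mpr (by exact_mod_cast hN)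
    have hsN1 : (0:ℝ) < Real.sqrt ((N:ℝ)+1) := Real.sqrt_pos.mpr (by positivity)
    have hNpos : (0:ℝ) < N := by exact_mod_cast hN
    have hsq : Real.sqrt N ^ 2 = N := Real.sq_sqrt (le_of_lt hNpos)
    have hsq1 : Real.sqrt ((N:ℝ)+1) ^ 2 = (N:ℝ)+1 := Real.sq_sqrt (by positivity)
    have key : 2 * Real.sqrt N * ((N:ℝ)+1) ≤ (2*N+1) * Real.sqrt ((N:ℝ)+1) := by
      have h1 : 2 * Real.sqrt N * ((N:ℝ)+1) = Real.sqrt (4*N*((N:ℝ)+1)^2) := by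
        rw [show (4:ℝ)*N*((N:ℝ)+1)^2 = (2 * Real.sqrt N * ((N:ℝ)+1))^2 by nlinarith [hsq]]
        rw [Real.sqrt_sq (by positivity)]
      have h2 : (2*(N:ℝ)+1) * Real.sqrt ((N:ℝ)+1) = Real.sqrt ((2*(N:ℝ)+1)^2*((N:ℝ)+1)) := by
        rw [show (2*(N:ℝ)+1)^2*((N:ℝ)+1) = ((2*(N:ℝ)+1) * Real.sqrt ((N:ℝ)+1))^2 by nlinarith [hsq1]]
        rw [Real.sqrt_sq (by positivity)]
      rw [h1, h2]
      exact Real.sqrt_le_sqrt (by nlinarith)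
    have hcb : (0:ℝ) < Nat.centralBinom N := by
      exact_mod_cast Nat.centralBinom_pos N
    have ih' : (4:ℝ)^N ≤ 2 * Real.sqrt N * Nat.centralBinom N := by
      rw [div_le_iff₀ (by positivity)] at ih; linarith
    rw [div_le_iff₀ (by positivity)]
    have hmul : (4:ℝ)^(N+1) * ((N:ℝ)+1) ≤ ((Nat.centralBinom (N+1) : ℝ) * (2 * Real.sqrt ((N:ℝ)+1))) * ((N:ℝ)+1) := by
      have A : 2 * Real.sqrt N * ((N:ℝ)+1) * (Nat.centralBinom N : ℝ)
          ≤ (2*N+1) * Real.sqrt ((N:ℝ)+1) * (Nat.centralBinom N : ℝ) :=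
        mul_le_mul_of_nonneg_right key hcb.le
      have B : (4:ℝ)^N * ((N:ℝ)+1) ≤ 2 * Real.sqrt N * (Nat.centralBinom N : ℝ) * ((N:ℝ)+1) :=
        mul_le_mul_of_nonneg_right ih' (by positivity)
      have hrw : ((Nat.centralBinom (N+1) : ℝ) * (2 * Real.sqrt ((N:ℝ)+1))) * ((N:ℝ)+1)
          = 2 * Real.sqrt ((N:ℝ)+1) * (2 * (2*N+1) * (Nat.centralBinom N : ℝ)) := by
        rw [← hrec]; push_cast; ring
      rw [hrw]
      have : (4:ℝ)^(N+1) = 4 * 4^N := by ring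
      nlinarith [A, B]
    have := mul_le_mul_of_nonneg_right (le_refl ((N:ℝ)+1)) (le_of_lt (by positivity : (0:ℝ) < 1))
    push_cast at hmul ⊢
    nlinarith [hmul]


/-- middle binomial coefficient lower bound -/
lemma middle_lower (n : ℕ) (hn : 1 ≤ n) :
    (2:ℝ)^n / (4 * Real.sqrt n) ≤ Nat.choose n ((n+1)/2) := by
  rcases Nat.even_or_odd n with ⟨N, hN⟩ | ⟨N, hN⟩
  · subst hN
    have hN1 : 1 ≤ N := by omega
    have h1 : (N + N + 1)/2 = N := by omega
    rw [h1]
    have := cb_lower N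
    rw [Nat.centralBinom] at this
    have h2 : 2*N = N + N := by ring
    rw [h2] at this
    refine le_trans ?_ this
    have hsN : (0:ℝ) < Real.sqrt N := Real.sqrt_pos.mpr (by exact_mod_cast hN1)
    have hsn : Real.sqrt N ≤ Real.sqrt (N+N) := Real.sqrt_le_sqrt (by push_cast; linarith [Nat.cast_nonneg (α := ℝ) N])
    have hpow : (2:ℝ)^(N+N) = 4^N := by rw [show N+N = 2*N by ring, pow_mul]; norm_num
    rw [hpow]
    apply div_le_div_of_nonneg_left (by positivity) (by positivity)
    push_cast; nlinarith [hsN, hsn]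
  · subst hN
    have h1 : (2*N+1+1)/2 = N+1 := by omega
    rw [h1]
    have hch : Nat.choose (2*N) N ≤ Nat.choose (2*N+1) (N+1) := by
      rw [Nat.choose_succ_succ]
      exact Nat.le_add_right _ _
    rcases Nat.eq_zero_or_pos N with rfl | hN0
    · have he : ((2*0+1 : ℕ):ℝ) = 1 := by norm_num
      rw [he, Real.sqrt_one]
      norm_num
    have := le_trans (cb_lower N) (by exact_mod_cast Nat.cast_le.mpr hch : (Nat.centralBinom N : ℝ) ≤ Nat.choose (2*N+1) (N+1))
    refine le_trans ?_ this
    have hsN : (0:ℝ) < Real.sqrt N := Real.sqrt_pos.mpr (by exact_mod_cast hN0)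
    have hsn : Real.sqrt N ≤ Real.sqrt ((2*N+1:ℕ)) := Real.sqrt_le_sqrt (by push_cast; linarith [Nat.cast_nonneg (α := ℝ) N])
    have hpow : (2:ℝ)^(2*N+1) = 2 * 4^N := by rw [pow_succ, pow_mul]; norm_num; ring
    rw [hpow]
    rw [div_le_div_iff₀ (by positivity) (by positivity)]
    have : (0:ℝ) < Real.sqrt ((2*N+1:ℕ)) := lt_of_lt_of_le hsN hsn
    nlinarith [hsN, hsn, pow_pos (show (0:ℝ)<4 by norm_num) N]


lemma exp_le_one_sub {θ x : ℝ} (hθ : 0 < θ) (hx : 0 ≤ x) (hx2 : x * (1+θ) ≤ θ) :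
    Real.exp (-((1+θ)*x)) ≤ 1 - x := by
  have h1 : 1 + (1+θ)*x ≤ Real.exp ((1+θ)*x) := by
    have := Real.add_one_le_exp ((1+θ)*x); linarith
  have hx1 : x < 1 := by nlinarith
  have h2 : (1:ℝ) ≤ (1-x) * (1+(1+θ)*x) := by nlinarith
  have h3 : (1:ℝ) ≤ (1-x) * Real.exp ((1+θ)*x) := by
    calc (1:ℝ) ≤ (1-x) * (1+(1+θ)*x) := h2
    _ ≤ (1-x) * Real.exp ((1+θ)*x) := by
        apply mul_le_mul_of_nonneg_left h1 (by linarith)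
  rw [Real.exp_neg]
  rw [inv_le_iff_one_le_mul₀ (Real.exp_pos _)]
  linarith [h3]

/-- binomial coefficient lower bound along the window, by induction -/
lemma choose_window (n : ℕ) (θ : ℝ) (hθ : 0 < θ) :
    ∀ d : ℕ, (n+1)/2 + d ≤ n → ((4:ℝ)/n) * d * (1+θ) ≤ θ →
    (Nat.choose n ((n+1)/2) : ℝ) * Real.exp (-((1+θ) * (2/n) * (d*(d+1)))) ≤
      Nat.choose n ((n+1)/2 + d) := by
  intro d
  induction d with
  | zero => intro _ _; simp
  | succ d ih =>
    intro hdn hdθ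
    set c := (n+1)/2 with hc
    have hn1 : 1 ≤ n := by omega
    have hnR : (0:ℝ) < n := by exact_mod_cast hn1
    have hd' : ((4:ℝ)/n) * d * (1+θ) ≤ θ := by
      have : ((4:ℝ)/n) * d ≤ ((4:ℝ)/n) * (d+1) := by
        apply mul_le_mul_of_nonneg_left (by linarith) (by positivity)
      push_cast at hdθ ⊢
      nlinarith [this]
    have IH := ih (by omega) hd'
    -- recurrence
    have hk : c + d < n := by omega
    have hrec : (Nat.choose n (c+d+1) : ℝ) * (c+d+1) = (Nat.choose n (c+d) : ℝ) * ((n:ℝ) - (c+d)) := by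
      have := Nat.choose_succ_right_eq n (c+d)
      have hcast := congrArg (Nat.cast : ℕ → ℝ) this
      push_cast [Nat.cast_sub (le_of_lt hk)] at hcast
      convert hcast using 2 <;> push_cast <;> ring
    -- x := 1 - (n - (c+d))/(c+d+1)
    set x : ℝ := (2*(c:ℝ)+2*d+1-n) / ((c:ℝ)+d+1) with hx
    have hden : (0:ℝ) < (c:ℝ)+d+1 := by positivity
    have h2c : (n:ℝ) ≤ 2*c ∧ 2*(c:ℝ) ≤ n+1 := by
      constructor <;> · have : n ≤ 2*((n+1)/2) ∧ 2*((n+1)/2) ≤ n+1 := by omega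
                        push_cast [hc]
                        exact_mod_cast by omega
    have hxnn : 0 ≤ x := by
      apply div_nonneg _ (le_of_lt hden)
      linarith [h2c.1]
    have hchain : ((n:ℝ) - (c+d)) / ((c:ℝ)+d+1) = 1 - x := by
      rw [hx, one_sub_div (ne_of_gt hden)]; congr 1; ring
    have hxle : x ≤ ((4:ℝ)/n) * (d+1) := by
      rw [hx, div_le_iff₀ hden]
      have hcge : (n:ℝ)/2 ≤ (c:ℝ) := by linarith [h2c.1]
      have : ((4:ℝ)/n) * (d+1) * ((c:ℝ)+d+1) ≥ ((4:ℝ)/n) * (d+1) * ((n:ℝ)/2) := by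
        apply mul_le_mul_of_nonneg_left _ (by positivity)
        linarith
      have heq : ((4:ℝ)/n) * ((d:ℝ)+1) * ((n:ℝ)/2) = 2*(d:ℝ)+2 := by
        field_simp; ring
      have hnum : 2*(c:ℝ)+2*d+1-n ≤ 2*(d:ℝ)+2 := by linarith [h2c.2]
      push_cast
      push_cast at this heq
      linarith
    have hxθ : x * (1+θ) ≤ θ := by
      have := mul_le_mul_of_nonneg_right hxle (by linarith : (0:ℝ) ≤ 1+θ)
      push_cast at hdθ this ⊢
      nlinarith [this]
    have hexp := exp_le_one_sub hθ hxnn hxθ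
    have hexp2 : Real.exp (-((1+θ) * (((4:ℝ)/n) * (d+1)))) ≤ 1 - x := by
      refine le_trans (Real.exp_le_exp.mpr ?_) hexp
      have := mul_le_mul_of_nonneg_left hxle (by linarith : (0:ℝ) ≤ 1+θ)
      linarith
    -- combine
    have hchoose_pos : (0:ℝ) < Nat.choose n c := by
      exact_mod_cast Nat.choose_pos (by omega)
    have hstep : (Nat.choose n (c+d) : ℝ) * Real.exp (-((1+θ) * (((4:ℝ)/n) * (d+1)))) ≤ Nat.choose n (c+d+1) := by
      have hck : (Nat.choose n (c+d+1) : ℝ) = (Nat.choose n (c+d) : ℝ) * (((n:ℝ) - ((c:ℝ)+d)) / ((c:ℝ)+d+1)) := by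
        rw [← mul_div_assoc, eq_div_iff (ne_of_gt hden)]
        exact hrec
      rw [hck, hchain]
      apply mul_le_mul_of_nonneg_left hexp2 (Nat.cast_nonneg _)
    have hne : (n:ℝ) ≠ 0 := ne_of_gt hnR
    have hsum : -((1+θ) * (2/(n:ℝ)) * (((d:ℝ)+1)*((d:ℝ)+2)))
        = -((1+θ) * (2/(n:ℝ)) * ((d:ℝ)*((d:ℝ)+1))) + -((1+θ) * ((4/(n:ℝ)) * ((d:ℝ)+1))) := by
      field_simp
      ring
    have final : (Nat.choose n c : ℝ) * Real.exp (-((1+θ)*(2/(n:ℝ))*(((d:ℝ)+1)*((d:ℝ)+2)))) ≤ Nat.choose n (c+d+1) := by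
      rw [hsum, Real.exp_add, ← mul_assoc]
      calc (Nat.choose n c : ℝ) * Real.exp (-((1+θ) * (2/(n:ℝ)) * ((d:ℝ)*((d:ℝ)+1)))) * Real.exp (-((1+θ) * ((4/(n:ℝ)) * ((d:ℝ)+1))))
          ≤ (Nat.choose n (c+d) : ℝ) * Real.exp (-((1+θ) * ((4/(n:ℝ)) * ((d:ℝ)+1)))) :=
            mul_le_mul_of_nonneg_right IH (le_of_lt (Real.exp_pos _))
      _ ≤ Nat.choose n (c+d+1) := hstep
    rw [show ((d+1:ℕ):ℝ) = (d:ℝ)+1 by push_cast; ring, show (d:ℝ)+1+1 = (d:ℝ)+2 by ring]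
    exact final


lemma count_lower (θ a : ℝ) (hθ : 0 < θ) (ha : 1 ≤ a) (n : ℕ)
    (h3 : 3 ≤ Real.sqrt n)
    (h1 : (a+9) * Real.sqrt n ≤ n)
    (h2 : 4*(a/2+4) * (1+θ) ≤ θ * Real.sqrt n) :
    (2:ℝ)^n * ((1/4) * Real.exp (-((1+θ) * (a+4)^2/2))) ≤
      ((univ.filter (fun S : Finset (Fin n) => a * Real.sqrt n ≤ |2*(S.card:ℝ) - n|)).card : ℝ) := by
  have hs0 : (0:ℝ) < Real.sqrt n := by linarith
  have hn1 : 1 ≤ n := by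
    rcases Nat.eq_zero_or_pos n with rfl | h
    · rw [Nat.cast_zero, Real.sqrt_zero] at h3; linarith
    · exact h
  have hn0 : (0:ℝ) < n := by exact_mod_cast hn1
  have hsq : Real.sqrt n * Real.sqrt n = n := Real.mul_self_sqrt (le_of_lt (by exact_mod_cast hn0))
  set c := (n+1)/2 with hc
  set q := Nat.ceil (a * Real.sqrt n / 2) with hq
  set w := Nat.ceil (Real.sqrt n) with hw
  have hcR : (c:ℝ) ≤ ((n:ℝ)+1)/2 ∧ (n:ℝ) ≤ 2*c := by
    have e1 : 2*c ≤ n+1 := by omega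
    have e2 : n ≤ 2*c := by omega
    have e1' : 2*(c:ℝ) ≤ (n:ℝ)+1 := by exact_mod_cast e1
    have e2' : (n:ℝ) ≤ 2*(c:ℝ) := by exact_mod_cast e2
    exact ⟨by linarith, e2'⟩
  have hqR : a * Real.sqrt n / 2 ≤ (q:ℝ) ∧ (q:ℝ) < a * Real.sqrt n / 2 + 1 :=
    ⟨Nat.le_ceil _, Nat.ceil_lt_add_one (by positivity)⟩
  have hwR : Real.sqrt n ≤ (w:ℝ) ∧ (w:ℝ) < Real.sqrt n + 1 :=
    ⟨Nat.le_ceil _, Nat.ceil_lt_add_one (by positivity)⟩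
  -- bound on d for k in window
  have hdbound : ∀ d : ℕ, d ≤ q + w - 1 → ((d:ℝ)+1 ≤ (a/2+2) * Real.sqrt n) := by
    intro d hd
    have hw1 : 1 ≤ w := by
      rw [hw]; exact Nat.one_le_ceil_iff.mpr (by linarith)
    have : (d:ℝ) ≤ (q:ℝ) + (w:ℝ) - 1 := by
      have : d ≤ q + w - 1 := hd
      have h' : (d:ℕ) + 1 ≤ q + w := by omega
      have := (Nat.cast_le (α := ℝ)).mpr h'
      push_cast at this; linarith
    have hd2 : (d:ℝ) ≤ a * Real.sqrt n / 2 + Real.sqrt n + 1 := by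
      linarith [hqR.2, hwR.2]
    linarith [h3]
  -- main per-k bound
  have hperk : ∀ d : ℕ, q ≤ d → d ≤ q + w - 1 →
      (2:ℝ)^n / (4 * Real.sqrt n) * Real.exp (-((1+θ) * (a+4)^2/2)) ≤ Nat.choose n (c + d) := by
    intro d hdq hdw
    have hd1 : (d:ℝ) + 1 ≤ (a/2+2) * Real.sqrt n := hdbound d hdw
    have hcd : c + d ≤ n := by
      have : (c:ℝ) + d ≤ (n:ℝ) := by
        have h5 : (1:ℝ) ≤ 5 * Real.sqrt n := by linarith
        nlinarith [hcR.1, hd1, h1, hsq, hs0]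
      exact_mod_cast this
    have hθc : ((4:ℝ)/n) * d * (1+θ) ≤ θ := by
      have hdn : ((4:ℝ)/n) * d ≤ 4*(a/2+2) / Real.sqrt n := by
        rw [div_mul_eq_mul_div, div_le_div_iff₀ hn0 hs0]
        have : (d:ℝ) ≤ (a/2+2) * Real.sqrt n := by linarith
        nlinarith [hsq, hs0]
      have : 4*(a/2+2) / Real.sqrt n * (1+θ) ≤ θ := by
        rw [div_mul_eq_mul_div, div_le_iff₀ hs0]
        nlinarith [h2]
      nlinarith [mul_le_mul_of_nonneg_right hdn (by linarith : (0:ℝ) ≤ 1+θ)]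
    have hwin := choose_window n θ hθ d hcd hθc
    have hmid := middle_lower n hn1
    have hexp : Real.exp (-((1+θ) * (2/n) * (d*(d+1)))) ≥ Real.exp (-((1+θ) * (a+4)^2/2)) := by
      apply Real.exp_le_exp.mpr
      have hd0 : (d:ℝ) ≤ (a/2+2) * Real.sqrt n := by linarith
      have hprod : (d:ℝ)*((d:ℝ)+1) ≤ (a/2+2)^2 * n := by nlinarith [hsq, Nat.cast_nonneg (α := ℝ) d]
      have : (2/(n:ℝ)) * ((d:ℝ)*((d:ℝ)+1)) ≤ (a+4)^2/2 := by
        rw [div_mul_eq_mul_div, div_le_div_iff₀ hn0 (by norm_num : (0:ℝ) < 2)]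
        nlinarith [hprod, hn0]
      nlinarith [this, hθ]
    calc (2:ℝ)^n / (4 * Real.sqrt n) * Real.exp (-((1+θ) * (a+4)^2/2))
        ≤ (Nat.choose n c : ℝ) * Real.exp (-((1+θ) * (a+4)^2/2)) :=
          mul_le_mul_of_nonneg_right hmid (le_of_lt (Real.exp_pos _))
    _ ≤ (Nat.choose n c : ℝ) * Real.exp (-((1+θ) * (2/n) * (d*(d+1)))) :=
          mul_le_mul_of_nonneg_left hexp (Nat.cast_nonneg _)
    _ ≤ Nat.choose n (c + d) := hwin
  -- the window of ks
  set K := Finset.Ico (c+q) (c+q+w) with hK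
  have hKsub : K.biUnion (fun k => Finset.powersetCard k (univ : Finset (Fin n)))
      ⊆ univ.filter (fun S : Finset (Fin n) => a * Real.sqrt n ≤ |2*(S.card:ℝ) - n|) := by
    intro S hS
    rw [Finset.mem_biUnion] at hS
    obtain ⟨k, hk, hSk⟩ := hS
    rw [Finset.mem_powersetCard] at hSk
    rw [Finset.mem_filter]
    refine ⟨Finset.mem_univ _, ?_⟩
    rw [Finset.mem_Ico] at hk
    have hcard : S.card = k := hSk.2
    have : a * Real.sqrt n ≤ 2*(k:ℝ) - n := by
      have : (c:ℝ) + q ≤ (k:ℝ) := by exact_mod_cast hk.1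
      linarith [hcR.2, hqR.1]
    rw [hcard]
    exact le_trans this (le_abs_self _)
  have hdisj : ∀ x ∈ K, ∀ y ∈ K, x ≠ y →
      Disjoint (Finset.powersetCard x (univ : Finset (Fin n))) (Finset.powersetCard y univ) := by
    intro x _ y _ hxy
    apply Finset.disjoint_left.mpr
    intro S hSx hSy
    rw [Finset.mem_powersetCard] at hSx hSy
    exact hxy (hSx.2.symm.trans hSy.2)
  have hcardB : ((K.biUnion (fun k => Finset.powersetCard k (univ : Finset (Fin n)))).card : ℝ)
      = ∑ k ∈ K, ((Nat.choose n k : ℕ) : ℝ) := by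
    rw [Finset.card_biUnion hdisj]
    push_cast
    apply Finset.sum_congr rfl
    intro k _
    rw [Finset.card_powersetCard, Finset.card_univ, Fintype.card_fin]
  -- sum lower bound
  have hsum : (2:ℝ)^n * ((1/4) * Real.exp (-((1+θ) * (a+4)^2/2))) ≤ ∑ k ∈ K, ((Nat.choose n k : ℕ) : ℝ) := by
    have hKcard : K.card = w := by rw [hK]; rw [Nat.card_Ico]; omega
    have hbound : ∀ k ∈ K, (2:ℝ)^n / (4 * Real.sqrt n) * Real.exp (-((1+θ) * (a+4)^2/2)) ≤ (Nat.choose n k : ℝ) := by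
      intro k hk
      rw [Finset.mem_Ico] at hk
      have hkd : k = c + (k - c) := by omega
      rw [hkd]
      exact hperk (k - c) (by omega) (by omega)
    calc (2:ℝ)^n * ((1/4) * Real.exp (-((1+θ) * (a+4)^2/2)))
        ≤ (w:ℝ) * ((2:ℝ)^n / (4 * Real.sqrt n) * Real.exp (-((1+θ) * (a+4)^2/2))) := by
          have hwge : Real.sqrt n ≤ (w:ℝ) := hwR.1
          have e1 : (0:ℝ) < (2:ℝ)^n / (4 * Real.sqrt n) * Real.exp (-((1+θ) * (a+4)^2/2)) := by positivity
          have : Real.sqrt n * ((2:ℝ)^n / (4 * Real.sqrt n) * Real.exp (-((1+θ) * (a+4)^2/2)))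
              = (2:ℝ)^n * ((1/4) * Real.exp (-((1+θ) * (a+4)^2/2))) := by
            field_simp
          rw [← this]
          exact mul_le_mul_of_nonneg_right hwge (le_of_lt e1)
    _ ≤ ∑ k ∈ K, ((Nat.choose n k : ℕ) : ℝ) := by
          have h := Finset.card_nsmul_le_sum K _ _ hbound
          rw [nsmul_eq_mul, hKcard] at h
          exact h
  refine le_trans hsum ?_
  rw [← hcardB]
  exact Nat.cast_le.mpr (Finset.card_le_card hKsub)


lemma binom_mgf (n : ℕ) (μ : ℝ) :
    ∑ k ∈ Finset.range (n+1), (Nat.choose n k : ℝ) * Real.exp (μ*(2*(k:ℝ) - n))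
      = (Real.exp μ + Real.exp (-μ))^n := by
  rw [add_pow]
  apply Finset.sum_congr rfl
  intro k hk
  rw [Finset.mem_range] at hk
  have hkn : k ≤ n := by omega
  rw [← Real.exp_nat_mul, ← Real.exp_nat_mul, ← Real.exp_add]
  rw [mul_comm ((Nat.choose n k : ℝ)) _]
  congr 1
  have : ((n - k : ℕ) : ℝ) = (n:ℝ) - k := by
    push_cast [Nat.cast_sub hkn]; ring
  rw [this]
  ring

lemma count_upper (n : ℕ) (hn : 1 ≤ n) (t : ℝ) (ht : 0 ≤ t) :
    ((univ.filter (fun S : Finset (Fin n) => t ≤ |2*(S.card:ℝ) - n|)).card : ℝ)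
      ≤ 2^(n+1) * Real.exp (-(t^2/(2*n))) := by
  have hn0 : (0:ℝ) < n := by exact_mod_cast hn
  set lam := t / n with hlam
  have hlam0 : 0 ≤ lam := by positivity
  set Q := (Finset.range (n+1)).filter (fun k : ℕ => t ≤ |2*(k:ℝ) - (n:ℝ)|) with hQ
  have hdecomp : univ.filter (fun S : Finset (Fin n) => t ≤ |2*(S.card:ℝ) - n|)
      = Q.biUnion (fun k => Finset.powersetCard k (univ : Finset (Fin n))) := by
    ext S
    simp only [hQ, Finset.mem_filter, Finset.mem_univ, true_and, Finset.mem_biUnion,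
      Finset.mem_range, Finset.mem_powersetCard]
    constructor
    · intro h
      exact ⟨S.card, ⟨Nat.lt_succ_of_le (by simpa using Finset.card_le_card (Finset.subset_univ S)), h⟩,
        Finset.subset_univ S, rfl⟩
    · rintro ⟨k, ⟨_, hk⟩, _, rfl⟩
      exact hk
  have hdisj : ∀ x ∈ Q, ∀ y ∈ Q, x ≠ y →
      Disjoint (Finset.powersetCard x (univ : Finset (Fin n))) (Finset.powersetCard y univ) := by
    intro x _ y _ hxy
    apply Finset.disjoint_left.mpr
    intro S hSx hSy
    rw [Finset.mem_powersetCard] at hSx hSy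
    exact hxy (hSx.2.symm.trans hSy.2)
  rw [hdecomp, Finset.card_biUnion hdisj]
  have hcards : ∀ k, (Finset.powersetCard k (univ : Finset (Fin n))).card = Nat.choose n k := by
    intro k; rw [Finset.card_powersetCard, Finset.card_univ, Fintype.card_fin]
  push_cast
  have hstep1 : (∑ k ∈ Q, ((Finset.powersetCard k (univ : Finset (Fin n))).card : ℝ))
      ≤ ∑ k ∈ Q, (Nat.choose n k : ℝ) *
        ((Real.exp (lam*(2*(k:ℝ) - n)) + Real.exp (-(lam*(2*(k:ℝ) - n)))) * Real.exp (-(lam*t))) := by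
    apply Finset.sum_le_sum
    intro k hk
    rw [hcards k]
    have hqual : t ≤ |2*(k:ℝ) - (n:ℝ)| := by
      rw [hQ, Finset.mem_filter] at hk; exact hk.2
    have hfac : (1:ℝ) ≤ (Real.exp (lam*(2*(k:ℝ) - n)) + Real.exp (-(lam*(2*(k:ℝ) - n)))) * Real.exp (-(lam*t)) := by
      have habs : Real.exp (lam*t) ≤ Real.exp (lam*|2*(k:ℝ) - n|) :=
        Real.exp_le_exp.mpr (mul_le_mul_of_nonneg_left hqual hlam0)
      have hsum : Real.exp (lam*|2*(k:ℝ) - n|)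
          ≤ Real.exp (lam*(2*(k:ℝ) - n)) + Real.exp (-(lam*(2*(k:ℝ) - n))) := by
        rcases abs_cases (2*(k:ℝ) - n) with ⟨he, _⟩ | ⟨he, _⟩
        · rw [he]; linarith [Real.exp_pos (-(lam*(2*(k:ℝ) - n)))]
        · rw [he, mul_neg, ← neg_mul]
          linarith [Real.exp_pos (lam*(2*(k:ℝ) - n)), le_refl (Real.exp (-(lam*(2*(k:ℝ)-n))))]
      have h1 : Real.exp (lam*t) * Real.exp (-(lam*t)) = 1 := by
        rw [← Real.exp_add]; simp
      calc (1:ℝ) = Real.exp (lam*t) * Real.exp (-(lam*t)) := h1.symm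
      _ ≤ (Real.exp (lam*(2*(k:ℝ) - n)) + Real.exp (-(lam*(2*(k:ℝ) - n)))) * Real.exp (-(lam*t)) := by
          apply mul_le_mul_of_nonneg_right (le_trans habs hsum) (le_of_lt (Real.exp_pos _))
    nth_rewrite 1 [← mul_one ((Nat.choose n k : ℝ))]
    exact mul_le_mul_of_nonneg_left hfac (Nat.cast_nonneg _)
  have hstep2 : (∑ k ∈ Q, (Nat.choose n k : ℝ) *
        ((Real.exp (lam*(2*(k:ℝ) - n)) + Real.exp (-(lam*(2*(k:ℝ) - n)))) * Real.exp (-(lam*t))))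
      ≤ ∑ k ∈ Finset.range (n+1), (Nat.choose n k : ℝ) *
        ((Real.exp (lam*(2*(k:ℝ) - n)) + Real.exp (-(lam*(2*(k:ℝ) - n)))) * Real.exp (-(lam*t))) := by
    apply Finset.sum_le_sum_of_subset_of_nonneg (by rw [hQ]; exact Finset.filter_subset _ _)
    intro k _ _
    positivity
  have hmgf : ∑ k ∈ Finset.range (n+1), (Nat.choose n k : ℝ) *
        ((Real.exp (lam*(2*(k:ℝ) - n)) + Real.exp (-(lam*(2*(k:ℝ) - n)))) * Real.exp (-(lam*t)))
      = ((Real.exp lam + Real.exp (-lam))^n + (Real.exp (-lam) + Real.exp (-(-lam)))^n) * Real.exp (-(lam*t)) := by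
    have e1 := binom_mgf n lam
    have e2 := binom_mgf n (-lam)
    rw [← e1, ← e2, ← Finset.sum_add_distrib, Finset.sum_mul]
    apply Finset.sum_congr rfl
    intro k _
    have : -lam * (2*(k:ℝ) - n) = -(lam*(2*(k:ℝ) - n)) := by ring
    rw [this]
    ring
  have hcosh : (Real.exp lam + Real.exp (-lam))^n ≤ 2^n * Real.exp ((n:ℝ) * lam^2/2) := by
    have h1 : Real.exp lam + Real.exp (-lam) = 2 * Real.cosh lam := by
      rw [Real.cosh_eq]; ring
    rw [h1, mul_pow]
    apply mul_le_mul_of_nonneg_left _ (by positivity)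
    calc Real.cosh lam ^ n ≤ (Real.exp (lam^2/2))^n :=
          pow_le_pow_left₀ (le_of_lt (Real.cosh_pos lam)) (Real.cosh_le_exp_half_sq lam) n
    _ = Real.exp ((n:ℝ) * lam^2/2) := by
          rw [← Real.exp_nat_mul]; congr 1; ring
  have hfinal : ((Real.exp lam + Real.exp (-lam))^n + (Real.exp (-lam) + Real.exp (-(-lam)))^n) * Real.exp (-(lam*t))
      ≤ 2^(n+1) * Real.exp (-(t^2/(2*n))) := by
    have h2 : (Real.exp (-lam) + Real.exp (-(-lam)))^n = (Real.exp lam + Real.exp (-lam))^n := by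
      rw [neg_neg, add_comm]
    rw [h2]
    have hexp : Real.exp ((n:ℝ) * lam^2/2) * Real.exp (-(lam*t)) = Real.exp (-(t^2/(2*n))) := by
      rw [← Real.exp_add]
      congr 1
      rw [hlam]
      field_simp
      ring
    calc ((Real.exp lam + Real.exp (-lam))^n + (Real.exp lam + Real.exp (-lam))^n) * Real.exp (-(lam*t))
        = 2 * (Real.exp lam + Real.exp (-lam))^n * Real.exp (-(lam*t)) := by ring
    _ ≤ 2 * (2^n * Real.exp ((n:ℝ) * lam^2/2)) * Real.exp (-(lam*t)) := by
        apply mul_le_mul_of_nonneg_right _ (le_of_lt (Real.exp_pos _))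
        apply mul_le_mul_of_nonneg_left hcosh (by norm_num)
    _ = 2^(n+1) * (Real.exp ((n:ℝ) * lam^2/2) * Real.exp (-(lam*t))) := by ring
    _ = 2^(n+1) * Real.exp (-(t^2/(2*n))) := by rw [hexp]
  calc (∑ k ∈ Q, ((Finset.powersetCard k (univ : Finset (Fin n))).card : ℝ))
      ≤ _ := hstep1
  _ ≤ _ := hstep2
  _ = _ := hmgf
  _ ≤ _ := hfinal


lemma prob_eq_count (Ω : Type) [MeasureSpace Ω] [IsProbabilityMeasure (ℙ : Measure Ω)]
    (X : ℕ → Ω → ℝ) (hX : ∀ i, Measurable (X i))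
    (hind : iIndepFun X ℙ)
    (hdist : ∀ i, ℙ {ω | X i ω = 1} = 1/2 ∧ ℙ {ω | X i ω = -1} = 1/2)
    (n : ℕ) (t : ℝ) :
    (ℙ {ω | t ≤ |∑ i ∈ range n, X i ω|}).toReal
      = ((univ.filter (fun S : Finset (Fin n) => t ≤ |2*(S.card:ℝ) - n|)).card : ℝ) * (1/2)^n := by
  classical
  -- sign pattern associated to S
  set v : Finset (Fin n) → ℕ → ℝ :=
    fun S i => if h : i < n then (if (⟨i, h⟩ : Fin n) ∈ S then 1 else -1) else 1 with hv
  set A : Finset (Fin n) → Set Ω := fun S => ⋂ i ∈ Finset.range n, (X i)⁻¹' {v S i} with hA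
  have hmeasA : ∀ S, MeasurableSet (A S) := by
    intro S
    apply MeasurableSet.biInter (Set.to_countable _)
    intro i _
    exact (hX i) (measurableSet_singleton _)
  have hprobA : ∀ S, ℙ (A S) = (1/2 : ℝ≥0∞)^n := by
    intro S
    rw [hA]
    rw [hind.meas_biInter (fun i _ => ⟨{v S i}, measurableSet_singleton _, rfl⟩)]
    have heach : ∀ i ∈ Finset.range n, ℙ ((X i)⁻¹' {v S i}) = (1/2 : ℝ≥0∞) := by
      intro i hi
      have : (X i)⁻¹' {v S i} = {ω | X i ω = v S i} := rfl
      rw [this]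
      rcases (hdist i) with ⟨h1, h2⟩
      by_cases hc : v S i = 1
      · rw [hc]; exact h1
      · have : v S i = -1 := by
          rw [hv]
          simp only []
          rw [Finset.mem_range] at hi
          rw [dif_pos hi]
          rw [hv] at hc
          simp only [] at hc
          rw [dif_pos hi] at hc
          split_ifs with hmem
          · exact absurd rfl (by rw [if_pos hmem] at hc; exact hc)
          · rfl
        rw [this]; exact h2
    rw [Finset.prod_congr rfl heach, Finset.prod_const, Finset.card_range]
  -- sum value on A S
  have hsumA : ∀ S, ∀ ω ∈ A S, ∑ i ∈ range n, X i ω = 2*(S.card:ℝ) - n := by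
    intro S ω hω
    rw [hA, Set.mem_iInter₂] at hω
    have hvals : ∀ i ∈ Finset.range n, X i ω = v S i := by
      intro i hi; exact hω i hi
    rw [Finset.sum_congr rfl hvals]
    rw [← Fin.sum_univ_eq_sum_range (fun i => v S i) n]
    have : ∀ i : Fin n, v S (i : ℕ) = if i ∈ S then (1:ℝ) else -1 := by
      intro i
      rw [hv]
      simp only []
      rw [dif_pos i.isLt]
    rw [Finset.sum_congr rfl (fun i _ => this i)]
    have hsplit : ∑ i : Fin n, (if i ∈ S then (1:ℝ) else -1)
        = ∑ i : Fin n, ((if i ∈ S then (2:ℝ) else 0) - 1) := by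
      apply Finset.sum_congr rfl
      intro i _
      split_ifs <;> ring
    rw [hsplit, Finset.sum_sub_distrib]
    rw [Finset.sum_const, Finset.card_univ, Fintype.card_fin]
    have : ∑ i : Fin n, (if i ∈ S then (2:ℝ) else 0) = 2 * S.card := by
      rw [Finset.sum_ite_mem, Finset.univ_inter, Finset.sum_const]
      rw [nsmul_eq_mul]; ring
    rw [this]
    push_cast
    ring
  -- distinct patterns are disjoint
  have hkey : ∀ S T : Finset (Fin n), ∀ ω, ω ∈ A S → ω ∈ A T → S = T := by
    intro S T ω hS hT
    ext i
    rw [hA, Set.mem_iInter₂] at hS hT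
    have h1 : X (i:ℕ) ω = v S (i:ℕ) := hS (i:ℕ) (Finset.mem_range.mpr i.isLt)
    have h2 : X (i:ℕ) ω = v T (i:ℕ) := hT (i:ℕ) (Finset.mem_range.mpr i.isLt)
    have hvS : v S (i:ℕ) = if i ∈ S then (1:ℝ) else -1 := by
      rw [hv]; simp only []; rw [dif_pos i.isLt]
    have hvT : v T (i:ℕ) = if i ∈ T then (1:ℝ) else -1 := by
      rw [hv]; simp only []; rw [dif_pos i.isLt]
    rw [hvS] at h1; rw [hvT] at h2
    rw [h1] at h2
    constructor
    · intro hiS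
      by_contra hiT
      rw [if_pos hiS, if_neg hiT] at h2; norm_num at h2
    · intro hiT
      by_contra hiS
      rw [if_neg hiS, if_pos hiT] at h2; norm_num at h2
  have hpd : (↑(univ : Finset (Finset (Fin n))) : Set (Finset (Fin n))).PairwiseDisjoint A := by
    intro S _ T _ hST
    exact Set.disjoint_left.mpr (fun ω hS hT => hST (hkey S T ω hS hT))
  set U : Set Ω := ⋃ S ∈ (univ : Finset (Finset (Fin n))), A S with hU
  have hmeasU : MeasurableSet U := by
    apply MeasurableSet.biUnion (Set.to_countable _)
    intro S _; exact hmeasA S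
  have hUnion : ℙ U = 1 := by
    rw [hU, measure_biUnion_finset hpd (fun S _ => hmeasA S)]
    rw [Finset.sum_congr rfl (fun S _ => hprobA S), Finset.sum_const, Finset.card_univ]
    rw [Fintype.card_finset, Fintype.card_fin]
    rw [nsmul_eq_mul]
    push_cast
    rw [one_div, ← ENNReal.inv_pow]
    exact ENNReal.mul_inv_cancel (by positivity) (by simp)
  set E : Set Ω := {ω | t ≤ |∑ i ∈ range n, X i ω|} with hE
  have hmeasE : MeasurableSet E := by
    have hsum : Measurable (fun ω => ∑ i ∈ range n, X i ω) :=
      Finset.measurable_sum _ (fun i _ => hX i)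
    exact measurableSet_le measurable_const hsum.abs
  have hEU : ℙ E = ℙ (E ∩ U) := by
    have h1 : ℙ (E ∩ U) + ℙ (E \ U) = ℙ E := measure_inter_add_diff E hmeasU
    have hcompl : ℙ Uᶜ = 0 := by
      rw [measure_compl hmeasU (measure_ne_top _ _), hUnion, measure_univ, tsub_self]
    have h2 : ℙ (E \ U) = 0 :=
      measure_mono_null (fun ω hω => hω.2) hcompl
    rw [← h1, h2, add_zero]
  have hsplit : ℙ (E ∩ U) = ∑ S ∈ (univ : Finset (Finset (Fin n))), ℙ (E ∩ A S) := by
    rw [hU, Set.inter_iUnion₂]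
    apply measure_biUnion_finset
    · intro S hS T hT hST
      exact Set.disjoint_left.mpr (fun ω hS' hT' => hST (hkey S T ω hS'.2 hT'.2))
    · intro S _
      exact hmeasE.inter (hmeasA S)
  have hterm : ∀ S : Finset (Fin n),
      ℙ (E ∩ A S) = if t ≤ |2*(S.card:ℝ) - n| then (1/2 : ℝ≥0∞)^n else 0 := by
    intro S
    by_cases hq : t ≤ |2*(S.card:ℝ) - n|
    · rw [if_pos hq]
      have hsub : A S ⊆ E := by
        intro ω hω
        rw [hE, Set.mem_setOf_eq, hsumA S ω hω]
        exact hq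
      rw [Set.inter_eq_self_of_subset_right hsub]
      exact hprobA S
    · rw [if_neg hq]
      have : E ∩ A S = ∅ := by
        ext ω
        simp only [Set.mem_inter_iff, Set.mem_empty_iff_false, iff_false, not_and]
        intro hωE hωA
        rw [hE, Set.mem_setOf_eq, hsumA S ω hωA] at hωE
        exact hq hωE
      rw [this, measure_empty]
  rw [hEU, hsplit, Finset.sum_congr rfl (fun S _ => hterm S)]
  rw [← Finset.sum_filter, Finset.sum_const, nsmul_eq_mul]
  rw [ENNReal.toReal_mul, ENNReal.toReal_pow, ENNReal.toReal_natCast]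
  norm_num


end RademacherAux
section RademacherMain

open MeasureTheory ProbabilityTheory Finset Real
open scoped ENNReal

lemma gap_lt (θ : ℝ) (hθ : 0 < θ) :
    2 * Real.exp (-((1+2*θ)*(30*(1+θ)/θ)^2/2))
      < (1/4) * Real.exp (-((1+θ)*((30*(1+θ)/θ)+4)^2/2)) := by
  set a := 30*(1+θ)/θ with hadef
  have haθ : a * θ = 30*(1+θ) := by rw [hadef]; field_simp
  have ha30 : 30 ≤ a := by
    rw [hadef, le_div_iff₀ hθ]; nlinarith
  have hu : 30 ≤ θ * a := by nlinarith
  have hD : (1+2*θ)*a^2/2 - (1+θ)*(a+4)^2/2 ≥ 5 := by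
    have h1θ : 1+θ = a*θ/30 := by rw [haθ]; ring
    nlinarith [mul_le_mul hu (le_refl a) (by linarith : (0:ℝ) ≤ a) (by linarith : (0:ℝ) ≤ θ*a),
      mul_pos hθ (by linarith : (0:ℝ) < a), hθ, ha30]
  have hexp5 : (8:ℝ) < Real.exp 5 := by
    have h1 : (2:ℝ) < Real.exp 1 := by
      have := Real.exp_one_gt_d9; norm_num at this ⊢; linarith
    have : (2:ℝ)^(5:ℕ) < (Real.exp 1)^(5:ℕ) := by
      apply pow_lt_pow_left₀ h1 (by norm_num)
      norm_num
    calc (8:ℝ) < 2^(5:ℕ) := by norm_num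
    _ < (Real.exp 1)^(5:ℕ) := this
    _ = Real.exp 5 := by rw [← Real.exp_nat_mul]; norm_num
  have hsplit : Real.exp (-((1+2*θ)*a^2/2))
      = Real.exp (-((1+θ)*(a+4)^2/2)) * Real.exp (-((1+2*θ)*a^2/2 - (1+θ)*(a+4)^2/2)) := by
    rw [← Real.exp_add]; congr 1; ring
  rw [hsplit]
  have h5 : Real.exp (-((1+2*θ)*a^2/2 - (1+θ)*(a+4)^2/2)) ≤ Real.exp (-(5:ℝ)) :=
    Real.exp_le_exp.mpr (by linarith)
  have hlt : 2 * Real.exp (-(5:ℝ)) < 1/4 := by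
    rw [Real.exp_neg]
    have hpos := Real.exp_pos 5
    have hinv : (Real.exp 5)⁻¹ * Real.exp 5 = 1 := inv_mul_cancel₀ (ne_of_gt hpos)
    have hipos : 0 < (Real.exp 5)⁻¹ := inv_pos.mpr hpos
    nlinarith [hexp5, hinv, hipos]
  have hE : (0:ℝ) < Real.exp (-((1+θ)*(a+4)^2/2)) := Real.exp_pos _
  calc 2 * (Real.exp (-((1+θ)*(a+4)^2/2)) * Real.exp (-((1+2*θ)*a^2/2 - (1+θ)*(a+4)^2/2)))
      ≤ 2 * (Real.exp (-((1+θ)*(a+4)^2/2)) * Real.exp (-(5:ℝ))) := by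
        apply mul_le_mul_of_nonneg_left (mul_le_mul_of_nonneg_left h5 hE.le) (by norm_num)
  _ = (2 * Real.exp (-(5:ℝ))) * Real.exp (-((1+θ)*(a+4)^2/2)) := by ring
  _ < (1/4) * Real.exp (-((1+θ)*(a+4)^2/2)) := by
        apply mul_lt_mul_of_pos_right hlt hE

end RademacherMain

/-- Lemma 4 (Berry–Esseen-type deviation lemma for Rademacher sums):
for any constant `τ ∈ (0,1]` there are positive constants `c₁, c₂, c₃` such that
for all positive integers `m' ≤ (1-τ)m` with `m` sufficiently large, if
`X₁, …` are independent uniform `{-1,1}`-valued random variables, then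
`Pr[|X₁+⋯+X_m| ≥ c₁√m] ≥ c₂+c₃` and `Pr[|X₁+⋯+X_{m'}| ≥ c₁√m] ≤ c₂-c₃`. -/
theorem stmt_0 (τ : ℝ) (hτ : τ ∈ Set.Ioc (0 : ℝ) 1) :
    ∃ c₁ c₂ c₃ : ℝ, 0 < c₁ ∧ 0 < c₂ ∧ 0 < c₃ ∧
      ∃ m₀ : ℕ, ∀ m m' : ℕ, m₀ ≤ m → 0 < m' → (m' : ℝ) ≤ (1 - τ) * m →
        ∀ (Ω : Type) [MeasureSpace Ω] [IsProbabilityMeasure (ℙ : Measure Ω)]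
          (X : ℕ → Ω → ℝ), (∀ i, Measurable (X i)) →
          iIndepFun X ℙ →
          (∀ i, ℙ {ω | X i ω = 1} = 1/2 ∧ ℙ {ω | X i ω = -1} = 1/2) →
          c₂ + c₃ ≤ (ℙ {ω | c₁ * Real.sqrt m ≤ |∑ i ∈ range m, X i ω|}).toReal ∧
          (ℙ {ω | c₁ * Real.sqrt m ≤ |∑ i ∈ range m', X i ω|}).toReal ≤ c₂ - c₃ := by
  obtain ⟨hτ0, hτ1⟩ := hτ
  rcases eq_or_lt_of_le hτ1 with heq | hlt
  · -- τ = 1 : hypotheses are contradictory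
    refine ⟨1, 2, 1, one_pos, two_pos, one_pos, 1, ?_⟩
    intro m m' _ hm' hle Ω _ _ X _ _ _
    exfalso
    rw [← heq] at hle
    have h0 : (0:ℝ) < m' := by exact_mod_cast hm'
    have : (1 - τ) * (m:ℝ) = 0 := by rw [← heq]; ring
    rw [← heq] at this
    nlinarith [hle, h0, this]
  · -- τ < 1
    have h1τ : 0 < 1 - τ := by linarith
    set θ := (1/(1-τ) - 1)/2 with hθdef
    have hfracgt : 1 < 1/(1-τ) := by
      rw [lt_div_iff₀ h1τ]; nlinarith
    have hθ : 0 < θ := by rw [hθdef]; linarith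
    have hfrac : 1/(1-τ) = 1 + 2*θ := by rw [hθdef]; ring
    set a := 30*(1+θ)/θ with hadef
    have ha0 : 0 < a := by positivity
    have ha30 : 30 ≤ a := by
      rw [hadef, le_div_iff₀ hθ]; nlinarith
    have ha1 : 1 ≤ a := by linarith
    set L := (1/4) * Real.exp (-((1+θ)*(a+4)^2/2)) with hLdef
    set Uu := 2 * Real.exp (-((1+2*θ)*a^2/2)) with hUdef
    have hkey : Uu < L := by rw [hUdef, hLdef, hadef]; exact gap_lt θ hθ
    have hLpos : 0 < L := by rw [hLdef]; positivity
    have hUpos : 0 < Uu := by rw [hUdef]; positivity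
    set M := 3 + (a+9) + 4*(a/2+4)*(1+θ)/θ with hMdef
    have hM9 : 3 + (a+9) ≤ M := by
      rw [hMdef]
      have : 0 ≤ 4*(a/2+4)*(1+θ)/θ := by positivity
      linarith
    have hM0 : 0 < M := by linarith
    refine ⟨a, (L+Uu)/2, (L-Uu)/2, ha0, by positivity, by linarith, Nat.ceil (M^2) + 1, ?_⟩
    intro m m' hm hm'pos hm'le Ω _ _ X hX hind hdist
    -- basic size facts
    have hmM : M^2 ≤ (m:ℝ) := by
      have h1 : (Nat.ceil (M^2) + 1 : ℕ) ≤ m := hm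
      have h2 : M^2 ≤ (Nat.ceil (M^2) : ℝ) := Nat.le_ceil _
      have h3 : ((Nat.ceil (M^2) + 1 : ℕ) : ℝ) ≤ m := by exact_mod_cast h1
      push_cast at h3; linarith
    have hm0 : (0:ℝ) < m := by nlinarith
    have hsm : M ≤ Real.sqrt m := (Real.le_sqrt hM0.le hm0.le).mpr hmM
    have hss : Real.sqrt m * Real.sqrt m = m := Real.mul_self_sqrt hm0.le
    have hs0 : 0 < Real.sqrt m := lt_of_lt_of_le hM0 hsm
    -- conditions for count_lower at n = m
    have h3' : 3 ≤ Real.sqrt m := by linarith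
    have h1' : (a+9) * Real.sqrt m ≤ m := by
      have ha9M : a + 9 ≤ M := by linarith
      nlinarith
    have h2' : 4*(a/2+4) * (1+θ) ≤ θ * Real.sqrt m := by
      have : 4*(a/2+4)*(1+θ)/θ ≤ M := by
        rw [hMdef]; nlinarith [ha0]
      have := le_trans this hsm
      rw [div_le_iff₀ hθ] at this
      linarith
    constructor
    · -- lower bound
      have hPm := prob_eq_count Ω X hX hind hdist m (a * Real.sqrt m)
      have hcl := count_lower θ a hθ ha1 m h3' h1' h2'
      rw [hPm]
      have hpow : (2:ℝ)^m * (1/2)^m = 1 := by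
        rw [← mul_pow]; norm_num
      have hc23 : (L+Uu)/2 + (L-Uu)/2 = L := by ring
      rw [hc23]
      have := mul_le_mul_of_nonneg_right hcl (by positivity : (0:ℝ) ≤ (1/2)^m)
      calc L = (2:ℝ)^m * ((1/4) * Real.exp (-((1+θ) * (a+4)^2/2))) * (1/2)^m := by
            rw [hLdef]; rw [mul_comm ((2:ℝ)^m) _, mul_assoc, hpow, mul_one]
      _ ≤ _ := this
    · -- upper bound
      have hPm' := prob_eq_count Ω X hX hind hdist m' (a * Real.sqrt m)
      have hcu := count_upper m' hm'pos (a * Real.sqrt m) (by positivity)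
      rw [hPm']
      have hc23 : (L+Uu)/2 - (L-Uu)/2 = Uu := by ring
      rw [hc23]
      have hm'0 : (0:ℝ) < m' := by exact_mod_cast hm'pos
      have hts : (a * Real.sqrt m)^2 = a^2 * m := by
        rw [mul_pow, Real.sq_sqrt hm0.le]
      have hmm' : (1+2*θ) * (m':ℝ) ≤ m := by
        rw [← hfrac]
        rw [div_mul_eq_mul_div, div_le_iff₀ h1τ] at *
        nlinarith [hm'le]
      have hexp : Real.exp (-((a * Real.sqrt m)^2/(2*m'))) ≤ Real.exp (-((1+2*θ)*a^2/2)) := by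
        apply Real.exp_le_exp.mpr
        rw [neg_le_neg_iff, hts]
        rw [le_div_iff₀ (by positivity : (0:ℝ) < 2*m')]
        nlinarith [sq_nonneg a, hm'0]
      have hpow2 : (2:ℝ)^(m'+1) * (1/2)^(m') = 2 := by
        rw [pow_succ, mul_comm ((2:ℝ)^m') 2, mul_assoc, ← mul_pow]; norm_num
      calc ((univ.filter (fun S : Finset (Fin m') => a * Real.sqrt m ≤ |2*(S.card:ℝ) - m'|)).card : ℝ) * (1/2)^m'
          ≤ (2^(m'+1) * Real.exp (-((a * Real.sqrt m)^2/(2*m')))) * (1/2)^m' :=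
            mul_le_mul_of_nonneg_right hcu (by positivity)
      _ = 2 * Real.exp (-((a * Real.sqrt m)^2/(2*m'))) := by
            rw [mul_comm ((2:ℝ)^(m'+1)) _, mul_assoc, hpow2, mul_comm]
      _ ≤ 2 * Real.exp (-((1+2*θ)*a^2/2)) := by
            apply mul_le_mul_of_nonneg_left hexp (by norm_num)
      _ = Uu := by rw [hUdef]
end

section
/- Let p′ ∈ (0,1], and let X₁, …, X_n be independent Geometric(p′) random variables. Let X = Σ_{i=1}^n X_i and μ = E[X] = n/p′. Then for any λ ≥ 1, Pr[X ≥ λμ] ≤ exp(−p′μ(λ − 1 − ln λ)). -/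
open MeasureTheory ProbabilityTheory Finset

/-- Upper tail bound for sums of independent geometric random variables
(Janson, Theorem 2.1): if `X₁,…,X_n` are independent `Geometric(p')` random variables
(taking value `ℓ ≥ 1` with probability `(1-p')^{ℓ-1} p'`), `X = ∑ Xᵢ` and `μ = n/p'`,
then for any `λ ≥ 1`, `Pr[X ≥ λμ] ≤ exp(-p'μ(λ - 1 - ln λ))`. -/
theorem stmt_5 (p' : ℝ) (hp' : p' ∈ Set.Ioc (0 : ℝ) 1) (n : ℕ) (hn : 0 < n)
    (Ω : Type) [MeasureSpace Ω] [IsProbabilityMeasure (ℙ : Measure Ω)]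
    (X : ℕ → Ω → ℕ) (hmeas : ∀ i, Measurable (X i))
    (hindep : iIndepFun X ℙ)
    (hgeom : ∀ i, ∀ ℓ : ℕ, ℙ {ω | X i ω = ℓ + 1} = ENNReal.ofReal ((1 - p')^ℓ * p'))
    (lam : ℝ) (hlam : 1 ≤ lam) :
    (ℙ {ω | lam * ((n : ℝ) / p') ≤ (∑ i ∈ range n, X i ω : ℕ)}).toReal
      ≤ Real.exp (-(p' * ((n : ℝ) / p')) * (lam - 1 - Real.log lam)) := by
  obtain ⟨hp0, hp1⟩ := hp'
  have hlam0 : (0:ℝ) < lam := lt_of_lt_of_le one_pos hlam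
  set q : ℝ := 1 - p' with hq
  have hq0 : 0 ≤ q := by simp [hq]; linarith
  have hq1 : q < 1 := by simp [hq]; linarith
  set A : ℝ := 1 - p' + p' / lam with hA
  have hplam : 0 < p' / lam := div_pos hp0 hlam0
  have hA0 : 0 < A := by rw [hA]; nlinarith
  have hAle1 : A ≤ 1 := by
    have h1 : p' / lam ≤ p' := div_le_self hp0.le hlam
    rw [hA]; linarith
  set t : ℝ := Real.log A⁻¹ with ht
  have ht0 : 0 ≤ t := Real.log_nonneg (one_le_inv_iff₀.mpr ⟨hA0, hAle1⟩)
  have hexp : Real.exp t = A⁻¹ := Real.exp_log (by positivity)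
  -- geometric series facts
  have hS1 : Summable (fun k : ℕ => q ^ k * p') :=
    (summable_geometric_of_lt_one hq0 hq1).mul_right _
  have hsum1 : ∑' k : ℕ, q ^ k * p' = 1 := by
    rw [tsum_mul_right, tsum_geometric_of_lt_one hq0 hq1]
    have : 1 - q = p' := by rw [hq]; ring
    rw [this, inv_mul_cancel₀ hp0.ne']
  set g : ℕ → ℝ := fun k => Real.exp (t * k) with hg
  have hg0 : ∀ k, 0 ≤ g k := fun k => (Real.exp_pos _).le
  set r : ℝ := q * Real.exp t with hr
  have hr0 : 0 ≤ r := mul_nonneg hq0 (Real.exp_pos _).le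
  have hAq : A - q = p' / lam := by rw [hA, hq]; ring
  have hqA : q < A := by
    have h2 : 0 < A - q := hAq ▸ hplam
    linarith
  have hr1 : r < 1 := by
    rw [hr, hexp]
    rw [mul_inv_lt_iff₀ hA0, one_mul]
    exact hqA
  have hterm : ∀ k : ℕ, q ^ k * p' * g (k + 1) = (p' * Real.exp t) * r ^ k := by
    intro k
    have h1 : g (k + 1) = Real.exp t * (Real.exp t) ^ k := by
      rw [hg]
      push_cast
      rw [mul_add, mul_one, Real.exp_add, mul_comm t (k:ℝ), Real.exp_nat_mul, mul_comm]
    rw [h1, hr, mul_pow]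
    ring
  have hS2 : Summable (fun k : ℕ => q ^ k * p' * g (k + 1)) := by
    simp_rw [hterm]
    exact ((summable_geometric_of_lt_one hr0 hr1).mul_left _)
  have hsum2 : ∑' k : ℕ, q ^ k * p' * g (k + 1) = lam := by
    simp_rw [hterm]
    rw [tsum_mul_left, tsum_geometric_of_lt_one hr0 hr1]
    have h1r : 1 - r = (p' / lam) * A⁻¹ := by
      rw [hr, hexp, ← hAq]
      field_simp
    rw [h1r, hexp]
    rw [mul_inv, inv_inv]
    field_simp
  -- per-i facts
  have key : ∀ i, mgf (fun ω => (X i ω : ℝ)) ℙ t = lam ∧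
      Integrable (fun ω => Real.exp (t * (X i ω : ℝ))) ℙ := by
    intro i
    set ν : Measure ℕ := Measure.map (X i) ℙ with hν
    have hν1 : ∀ k : ℕ, ν {k + 1} = ENNReal.ofReal (q ^ k * p') := by
      intro k
      rw [hν, Measure.map_apply (hmeas i) (measurableSet_singleton _)]
      exact hgeom i k
    have hshift : ∑' k : ℕ, ν {k + 1} = 1 := by
      simp_rw [hν1]
      rw [← ENNReal.ofReal_tsum_of_nonneg (fun k => by positivity) hS1, hsum1,
        ENNReal.ofReal_one]
    have htot : ∑' k : ℕ, ν {k} = 1 := by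
      have hu : (Set.univ : Set ℕ) = ⋃ k : ℕ, {k} := (Set.iUnion_of_singleton ℕ).symm
      have : ν Set.univ = ∑' k : ℕ, ν {k} := by
        rw [hu, measure_iUnion (fun a b hab => by simp [Set.disjoint_singleton, hab])
          (fun k => measurableSet_singleton k)]
      rw [← this, hν, Measure.map_apply (hmeas i) MeasurableSet.univ]
      simp
    have hν0 : ν {0} = 0 := by
      have h := tsum_eq_zero_add' (f := fun k : ℕ => ν {k}) ENNReal.summable
      rw [htot, hshift] at h
      have h' : ν {0} + 1 = 0 + 1 := by rw [zero_add]; exact h.symm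
      exact WithTop.add_right_cancel ENNReal.one_ne_top h'
    have hgmeas : Measurable g := measurable_from_top
    have hint_g : Integrable g ν := by
      refine ⟨hgmeas.aestronglyMeasurable, ?_⟩
      show (∫⁻ k, ‖g k‖₊ ∂ν) < ⊤
      rw [lintegral_countable' (fun k => (‖g k‖₊ : ENNReal))]
      rw [tsum_eq_zero_add' ENNReal.summable]
      have h0 : (‖g 0‖₊ : ENNReal) * ν {0} = 0 := by rw [hν0, mul_zero]
      rw [h0, zero_add]
      have he : ∀ k : ℕ, (‖g (k + 1)‖₊ : ENNReal) * ν {k + 1}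
          = ENNReal.ofReal (q ^ k * p' * g (k + 1)) := by
        intro k
        rw [hν1 k, ← enorm_eq_nnnorm, Real.enorm_eq_ofReal (hg0 _), ← ENNReal.ofReal_mul (hg0 _)]
        congr 1
        ring
      simp_rw [he]
      rw [← ENNReal.ofReal_tsum_of_nonneg (fun k => by positivity) hS2]
      exact ENNReal.ofReal_lt_top
    have hint_i : Integrable (fun ω => Real.exp (t * (X i ω : ℝ))) ℙ :=
      hint_g.comp_aemeasurable (hmeas i).aemeasurable
    refine ⟨?_, hint_i⟩
    have hmgf : mgf (fun ω => (X i ω : ℝ)) ℙ t = ∫ k, g k ∂ν := by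
      rw [mgf, hν, integral_map (hmeas i).aemeasurable hgmeas.aestronglyMeasurable]
    rw [hmgf, integral_countable' hint_g]
    simp_rw [measureReal_def]
    have hSf : Summable (fun k : ℕ => (ν {k}).toReal • g k) := by
      apply (summable_nat_add_iff 1).mp
      apply Summable.congr hS2
      intro k
      rw [hν1 k, ENNReal.toReal_ofReal (by positivity), smul_eq_mul]
    rw [Summable.tsum_eq_zero_add hSf, hν0]
    simp only [ENNReal.toReal_zero, zero_smul, zero_add]
    rw [← hsum2]
    apply tsum_congr
    intro k
    rw [hν1 k, ENNReal.toReal_ofReal (by positivity), smul_eq_mul]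
  -- assemble
  set Y : ℕ → Ω → ℝ := fun i ω => (X i ω : ℝ) with hY
  have hYmeas : ∀ i, Measurable (Y i) := fun i => measurable_from_top.comp (hmeas i)
  have hYindep : iIndepFun Y ℙ :=
    hindep.comp (fun _ => (Nat.cast : ℕ → ℝ)) (fun _ => measurable_from_top)
  have hintS : Integrable (fun ω => Real.exp (t * (∑ i ∈ range n, Y i) ω)) ℙ :=
    hYindep.integrable_exp_mul_sum hYmeas (fun i _ => (key i).2)
  have chern := measure_ge_le_exp_mul_mgf (μ := ℙ) (X := ∑ i ∈ range n, Y i)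
    (lam * ((n : ℝ) / p')) ht0 hintS
  have hset : {ω | lam * ((n : ℝ) / p') ≤ (∑ i ∈ range n, Y i) ω}
      = {ω | lam * ((n : ℝ) / p') ≤ ((∑ i ∈ range n, X i ω : ℕ) : ℝ)} := by
    ext ω
    simp [hY, Finset.sum_apply]
  rw [hset] at chern
  have hmgfS : mgf (∑ i ∈ range n, Y i) ℙ t = lam ^ n := by
    rw [hYindep.mgf_sum hYmeas (range n)]
    rw [Finset.prod_congr rfl (fun i _ => (key i).1)]
    simp
  rw [hmgfS] at chern
  refine chern.trans ?_
  -- final arithmetic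
  have hpow : lam ^ n = Real.exp ((n : ℝ) * Real.log lam) := by
    rw [Real.exp_nat_mul, Real.exp_log hlam0]
  rw [hpow, ← Real.exp_add, Real.exp_le_exp]
  have hnp : p' * ((n : ℝ) / p') = n := by field_simp
  rw [hnp]
  have hxt : p' * (lam - 1) / lam ≤ t := by
    set x : ℝ := p' * (lam - 1) / lam with hx
    have hAx : A = 1 - x := by rw [hA, hx]; field_simp; ring
    have hx1 : 1 - x ≤ Real.exp (-x) := by
      have := Real.add_one_le_exp (-x)
      linarith
    have hlogA : Real.log A ≤ -x := by
      rw [Real.log_le_iff_le_exp hA0, hAx]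
      exact hx1
    rw [ht, Real.log_inv]
    linarith
  have hn0 : (0:ℝ) ≤ n := Nat.cast_nonneg n
  have hkey : (n : ℝ) * (lam - 1) ≤ t * (lam * ((n : ℝ) / p')) := by
    have h1 : (p' * (lam - 1) / lam) * (lam * ((n : ℝ) / p')) = (n : ℝ) * (lam - 1) := by
      field_simp
    calc (n : ℝ) * (lam - 1) = (p' * (lam - 1) / lam) * (lam * ((n : ℝ) / p')) := h1.symm
      _ ≤ t * (lam * ((n : ℝ) / p')) := by
          apply mul_le_mul_of_nonneg_right hxt
          positivity
  nlinarith [hkey]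
end
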